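/- arXiv:2201.06801 — 4 statements merged into one kernel-verified Lean document; each statement's English description precedes it below -/
import Mathlib

section
/- For every L(1,2)-edge labeling f of G_v and every edge e in S_1, no edge of G_v other than e has label f(e); that is, the label of an edge incident to v is used exactly once in G_v. -/
/-! Every edge of `G_v` has an endpoint `u` adjacent to `v`. An edge of `S_1` contains `v`, so any
other edge of `G_v` either meets it or is joined to it by the edge `vu`; in both cases the
L(1,2) condition forces the two labels apart. -/

/-- The infinite triangular grid `T6`. -/
def T6 : SimpleGraph (ℤ × ℤ) where
  Adj u v := (v.1 - u.1, v.2 - u.2) ∈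
    ({(1,0), (-1,0), (0,1), (0,-1), (1,1), (-1,-1)} : Set (ℤ × ℤ))
  symm := by
    constructor
    rintro ⟨a, b⟩ ⟨c, d⟩ h
    simp only [Set.mem_insert_iff, Set.mem_singleton_iff, Prod.mk.injEq] at h ⊢
    omega
  loopless := by
    constructor
    rintro ⟨a, b⟩ h
    simp only [Set.mem_insert_iff, Set.mem_singleton_iff, Prod.mk.injEq, sub_self] at h
    omega

/-- `f` is an L(1,2)-edge labeling of `G`. -/
def IsL12 {V : Type*} (G : SimpleGraph V) (f : Sym2 V → ℕ) : Prop :=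
  (∀ e1 ∈ G.edgeSet, ∀ e2 ∈ G.edgeSet, e1 ≠ e2 → (∃ v, v ∈ e1 ∧ v ∈ e2) →
    f e1 ≠ f e2) ∧
  (∀ e1 ∈ G.edgeSet, ∀ e2 ∈ G.edgeSet, e1 ≠ e2 → ¬ (∃ v, v ∈ e1 ∧ v ∈ e2) →
    (∃ e3 ∈ G.edgeSet, (∃ v, v ∈ e1 ∧ v ∈ e3) ∧ (∃ v, v ∈ e2 ∧ v ∈ e3)) →
    2 ≤ |(f e1 : ℤ) - (f e2 : ℤ)|)

/-- The subgraph `G_v` of `T6`: all edges with an endpoint adjacent to `v`. -/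
def Gv (v : ℤ × ℤ) : SimpleGraph (ℤ × ℤ) where
  Adj u w := T6.Adj u w ∧ (T6.Adj v u ∨ T6.Adj v w)
  symm := ⟨fun u w h => ⟨T6.symm.symm _ _ h.1, h.2.symm⟩⟩
  loopless := ⟨fun u h => T6.loopless.irrefl u h.1⟩

/-- `S_1`: the edges of `G_v` incident to `v`. -/
def S1 (v : ℤ × ℤ) : Set (Sym2 (ℤ × ℤ)) := {e | e ∈ (Gv v).edgeSet ∧ v ∈ e}

/-- `S_2`: the edges of `G_v` both of whose endpoints are adjacent to `v`. -/
def S2 (v : ℤ × ℤ) : Set (Sym2 (ℤ × ℤ)) := {e | e ∈ (Gv v).edgeSet ∧ ∀ u ∈ e, T6.Adj v u}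

/-- `S_3`: the remaining edges of `G_v`. -/
def S3 (v : ℤ × ℤ) : Set (Sym2 (ℤ × ℤ)) := (Gv v).edgeSet \ (S1 v ∪ S2 v)

theorem IsL12.apply_ne_of_mem_of_adj {V : Type*} {G : SimpleGraph V} {f : Sym2 V → ℕ}
    (hf : IsL12 G f) {e e' : Sym2 V} (he : e ∈ G.edgeSet) (he' : e' ∈ G.edgeSet) (hne : e' ≠ e)
    {v u : V} (hv : v ∈ e) (hu : u ∈ e') (hvu : G.Adj v u) : f e' ≠ f e := by
  intro heq
  by_cases hmeet : ∃ w, w ∈ e' ∧ w ∈ e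
  · exact hf.1 e' he' e he hne hmeet heq
  · have hgap := hf.2 e' he' e he hne hmeet
      ⟨s(v, u), hvu, ⟨u, hu, Sym2.mem_mk_right v u⟩, ⟨v, hv, Sym2.mem_mk_left v u⟩⟩
    simp [heq] at hgap

theorem Gv.exists_adj_of_mem_edgeSet {v : ℤ × ℤ} {e : Sym2 (ℤ × ℤ)} (he : e ∈ (Gv v).edgeSet) :
    ∃ u ∈ e, (Gv v).Adj v u := by
  induction e using Sym2.ind with
  | _ b c =>
    obtain ⟨-, hvb | hvc⟩ := he
    · exact ⟨b, Sym2.mem_mk_left b c, hvb, Or.inr hvb⟩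
    · exact ⟨c, Sym2.mem_mk_right b c, hvc, Or.inr hvc⟩

/-- The label of an edge of `S_1` is used exactly once in `G_v`: no other edge of
`G_v` has the same label. -/
theorem S1_label_unique (v : ℤ × ℤ) (f : Sym2 (ℤ × ℤ) → ℕ) (hf : IsL12 (Gv v) f) :
    ∀ e ∈ S1 v, ∀ e' ∈ (Gv v).edgeSet, e' ≠ e → f e' ≠ f e := by
  rintro e ⟨he, hv⟩ e' he' hne
  obtain ⟨u, hu, hvu⟩ := Gv.exists_adj_of_mem_edgeSet he'
  exact hf.apply_ne_of_mem_of_adj he he' hne hv hu hvu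
end

section
/- For every L(1,2)-edge labeling f of G_v and every edge e in S_1, at most one edge of G_v has label f(e)+1, and at most one edge of G_v has label f(e)−1. -/
/- Labels `f e ± 1` are at distance `< 2` from `f e`, so an edge carrying one must meet `e`:
every edge of `G_v` is linked to `e ∈ S_1` through a spoke at `v`. Two distinct such edges with
the same label cannot meet, so they are at distance 2 through `e`, forcing their labels `2` apart. -/

def Sym2.Meets {V : Type*} (e₁ e₂ : Sym2 V) : Prop := ∃ v, v ∈ e₁ ∧ v ∈ e₂

namespace IsL12

variable {V : Type*} {G : SimpleGraph V} {f : Sym2 V → ℕ} {e e' e₁ e₂ : Sym2 V}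

theorem meets_of_abs_sub_lt_two (hf : IsL12 G f) (he : e ∈ G.edgeSet) (he' : e' ∈ G.edgeSet)
    (hlink : ∃ e₃ ∈ G.edgeSet, e.Meets e₃ ∧ e'.Meets e₃)
    (hlt : |(f e' : ℤ) - (f e : ℤ)| < 2) : e'.Meets e := by
  by_cases hee' : e' = e
  · subst hee'
    exact ⟨e'.out.1, Sym2.out_fst_mem e', Sym2.out_fst_mem e'⟩
  by_contra hdisj
  obtain ⟨e₃, h₃, hm, hm'⟩ := hlink
  have := hf.2 e' he' e he hee' hdisj ⟨e₃, h₃, hm', hm⟩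
  omega

theorem eq_of_meets_of_label_eq (hf : IsL12 G f) (he : e ∈ G.edgeSet)
    (h₁ : e₁ ∈ G.edgeSet) (h₂ : e₂ ∈ G.edgeSet) (hm₁ : e₁.Meets e) (hm₂ : e₂.Meets e)
    (heq : f e₁ = f e₂) : e₁ = e₂ := by
  by_contra hne
  by_cases hm : e₁.Meets e₂
  · exact hf.1 e₁ h₁ e₂ h₂ hne hm heq
  · have := hf.2 e₁ h₁ e₂ h₂ hne hm ⟨e, he, hm₁, hm₂⟩
    simp [heq] at this

theorem eq_of_label_eq_of_abs_sub_eq_one (hf : IsL12 G f) (he : e ∈ G.edgeSet)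
    (hlink : ∀ e' ∈ G.edgeSet, ∃ e₃ ∈ G.edgeSet, e.Meets e₃ ∧ e'.Meets e₃)
    (h₁ : e₁ ∈ G.edgeSet) (h₂ : e₂ ∈ G.edgeSet) (hd : |(f e₁ : ℤ) - (f e : ℤ)| = 1)
    (heq : f e₁ = f e₂) : e₁ = e₂ := by
  have meets_e {e'} (he' : e' ∈ G.edgeSet) (hd' : |(f e' : ℤ) - (f e : ℤ)| = 1) : e'.Meets e :=
    meets_of_abs_sub_lt_two hf he he' (hlink e' he') (by omega)
  exact eq_of_meets_of_label_eq hf he h₁ h₂ (meets_e h₁ hd) (meets_e h₂ (heq ▸ hd)) heq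

end IsL12

theorem Gv.exists_mem_adj_of_mem_edgeSet {v : ℤ × ℤ} {e : Sym2 (ℤ × ℤ)}
    (he : e ∈ (Gv v).edgeSet) : ∃ u ∈ e, T6.Adj v u := by
  induction e using Sym2.ind with
  | _ a b =>
    rcases he.2 with ha | hb
    · exact ⟨a, Sym2.mem_mk_left a b, ha⟩
    · exact ⟨b, Sym2.mem_mk_right a b, hb⟩

theorem S1.exists_edge_meeting {v : ℤ × ℤ} {e e' : Sym2 (ℤ × ℤ)} (he : e ∈ S1 v)
    (he' : e' ∈ (Gv v).edgeSet) : ∃ e₃ ∈ (Gv v).edgeSet, e.Meets e₃ ∧ e'.Meets e₃ := by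
  obtain ⟨u, hu, hvu⟩ := Gv.exists_mem_adj_of_mem_edgeSet he'
  exact ⟨s(v, u), ⟨hvu, Or.inr hvu⟩, ⟨v, he.2, Sym2.mem_mk_left v u⟩,
    ⟨u, hu, Sym2.mem_mk_right v u⟩⟩

/-- For an edge `e ∈ S_1`, at most one edge of `G_v` has label `f e + 1` and at most
one edge of `G_v` has label `f e - 1`. -/
theorem S1_adjacent_labels_once (v : ℤ × ℤ) (f : Sym2 (ℤ × ℤ) → ℕ)
    (hf : IsL12 (Gv v) f) : ∀ e ∈ S1 v,
    (∀ e1 ∈ (Gv v).edgeSet, ∀ e2 ∈ (Gv v).edgeSet,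
      f e1 = f e + 1 → f e2 = f e + 1 → e1 = e2) ∧
    (∀ e1 ∈ (Gv v).edgeSet, ∀ e2 ∈ (Gv v).edgeSet,
      (f e1 : ℤ) = (f e : ℤ) - 1 → (f e2 : ℤ) = (f e : ℤ) - 1 → e1 = e2) := by
  intro e he
  refine ⟨fun e₁ h₁ e₂ h₂ hf₁ hf₂ ↦ ?_, fun e₁ h₁ e₂ h₂ hf₁ hf₂ ↦ ?_⟩ <;>
    exact hf.eq_of_label_eq_of_abs_sub_eq_one he.1 (fun _ ↦ S1.exists_edge_meeting he) h₁ h₂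
      ((abs_eq zero_le_one).2 (by omega)) (by omega)
end

section
/- Let f be an L(1,2)-edge labeling of the 12-edge graph G and suppose edges x ∈ S_1 and y ∈ S_2 satisfy f(x) = f(y) = c. If the other edge x' of S_1 satisfies |f(x') − c| ≥ 2, then at least one of the values c+1, c−1 is not the label of any edge of G; likewise, if the other edge y' of S_2 satisfies |f(y') − c| ≥ 2, then at least one of c+1, c−1 is not the label of any edge of G. The analogous statements hold with S_3 and S_4 in place of S_1 and S_2. -/
/-- The infinite square grid `T4`: `(x, y)` and `(x', y')` are adjacent exactly when
`|x - x'| + |y - y'| = 1`. -/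
def T4 : SimpleGraph (ℤ × ℤ) where
  Adj u v := |u.1 - v.1| + |u.2 - v.2| = 1
  symm := by
    constructor
    intro u v h
    rw [abs_sub_comm v.1 u.1, abs_sub_comm v.2 u.2]
    exact h
  loopless := by
    constructor
    intro u h
    simp at h

/-- The corners of the unit square `Q`. -/
def Q : Set (ℤ × ℤ) := {(0,0), (1,0), (1,1), (0,1)}

/-- The 12-edge subgraph `G` of `T4`: all edges of `T4` incident to a corner of `Q`. -/
def G4 : SimpleGraph (ℤ × ℤ) where
  Adj u w := T4.Adj u w ∧ (u ∈ Q ∨ w ∈ Q)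
  symm := ⟨fun u w h => ⟨T4.symm.1 _ _ h.1, h.2.symm⟩⟩
  loopless := ⟨fun u h => T4.loopless.1 u h.1⟩

/-- The central edges: edges of `G` with both endpoints in `Q` (the 4 sides of `Q`). -/
def Central : Set (Sym2 (ℤ × ℤ)) := {e | e ∈ G4.edgeSet ∧ ∀ u ∈ e, u ∈ Q}

/-- The pendant edges of `G` at the corner `u`: edges incident to `u` whose other
endpoint is outside `Q`. -/
def Pendant (u : ℤ × ℤ) : Set (Sym2 (ℤ × ℤ)) :=
  {e | e ∈ G4.edgeSet ∧ u ∈ e ∧ ∃ w ∈ e, w ∉ Q}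

/-- `S_1`: the pair of pendant edges at the corner `(0,0)`. -/
def PS1 : Set (Sym2 (ℤ × ℤ)) := Pendant (0, 0)
/-- `S_2`: the pair of pendant edges at the corner `(1,1)`. -/
def PS2 : Set (Sym2 (ℤ × ℤ)) := Pendant (1, 1)
/-- `S_3`: the pair of pendant edges at the corner `(1,0)`. -/
def PS3 : Set (Sym2 (ℤ × ℤ)) := Pendant (1, 0)
/-- `S_4`: the pair of pendant edges at the corner `(0,1)`. -/
def PS4 : Set (Sym2 (ℤ × ℤ)) := Pendant (0, 1)

/-!
If `x` and `y` both carry the label `c`, every edge at distance two from `x` or from `y` has a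
label differing from `c` by at least 2. In `G`, with `x, x'` the two pendant edges at one corner
and `y, y'` those at the opposite corner, every edge other than these four is at distance two
from `x` or from `y`; this is checked by enumerating the 12 edges. Since `x'` is far from `c`,
only `y'` can carry `c + 1` or `c - 1`, and it carries at most one of them.
-/

section Labeling

variable {V : Type*}

def EdgesMeet (e₁ e₂ : Sym2 V) : Prop := ∃ v, v ∈ e₁ ∧ v ∈ e₂

instance Sym2.decidableExistsMem {p : V → Prop} [DecidablePred p] (e : Sym2 V) :
    Decidable (∃ v ∈ e, p v) :=
  e.recOnSubsingleton fun a b => decidable_of_iff' (p a ∨ p b) (by simp)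

instance [DecidableEq V] : DecidableRel (EdgesMeet (V := V)) := fun e₁ e₂ =>
  inferInstanceAs (Decidable (∃ v ∈ e₁, v ∈ e₂))

lemma edgesMeet_self (e : Sym2 V) : EdgesMeet e e := by
  induction e using Sym2.ind with | _ a b => exact ⟨a, Sym2.mem_mk_left a b, Sym2.mem_mk_left a b⟩

def AtDistTwo (G : SimpleGraph V) (e₁ e₂ : Sym2 V) : Prop :=
  ¬ EdgesMeet e₁ e₂ ∧ ∃ e₃ ∈ G.edgeSet, EdgesMeet e₁ e₃ ∧ EdgesMeet e₂ e₃

def CoveredAtDistTwo (G : SimpleGraph V) (x x' y y' : Sym2 V) : Prop :=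
  ∀ e ∈ G.edgeSet, e ≠ x → e ≠ x' → e ≠ y → e ≠ y' → AtDistTwo G e x ∨ AtDistTwo G e y

lemma CoveredAtDistTwo.symm {G : SimpleGraph V} {x x' y y' : Sym2 V}
    (h : CoveredAtDistTwo G x x' y y') : CoveredAtDistTwo G y y' x x' :=
  fun e he hy hy' hx hx' => (h e he hx hx' hy hy').symm

variable {G : SimpleGraph V} {f : Sym2 V → ℕ}

lemma IsL12.two_le_abs_sub (hf : IsL12 G f) {e₁ e₂ : Sym2 V} (he₁ : e₁ ∈ G.edgeSet)
    (he₂ : e₂ ∈ G.edgeSet) (h : AtDistTwo G e₁ e₂) : 2 ≤ |(f e₁ : ℤ) - f e₂| :=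
  hf.2 e₁ he₁ e₂ he₂ (fun he => h.1 (he ▸ edgesMeet_self e₁)) h.1 h.2

lemma IsL12.unused_neighbor_label_of_covered (hf : IsL12 G f) {c : ℕ} {x x' y y' : Sym2 V}
    (hx : x ∈ G.edgeSet) (hy : y ∈ G.edgeSet) (hfx : f x = c) (hfy : f y = c)
    (hfx' : 2 ≤ |(f x' : ℤ) - c|) (hcov : CoveredAtDistTwo G x x' y y') :
    (∀ e ∈ G.edgeSet, f e ≠ c + 1) ∨ (∀ e ∈ G.edgeSet, (f e : ℤ) ≠ c - 1) := by
  have near : ∀ e ∈ G.edgeSet, |(f e : ℤ) - c| = 1 → e = y' := by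
    intro e he hfe
    by_contra hey'
    have hex : e ≠ x := by rintro rfl; simp [hfx] at hfe
    have hey : e ≠ y := by rintro rfl; simp [hfy] at hfe
    have hex' : e ≠ x' := by rintro rfl; omega
    rcases hcov e he hex hex' hey hey' with h | h
    · have := hf.two_le_abs_sub he hx h; rw [hfx] at this; omega
    · have := hf.two_le_abs_sub he hy h; rw [hfy] at this; omega
  by_contra! ⟨⟨e₁, he₁, hf₁⟩, ⟨e₂, he₂, hf₂⟩⟩
  have h₁ := near e₁ he₁ (by simp [hf₁])
  have h₂ := near e₂ he₂ (by simp [hf₂])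
  subst h₁ h₂
  omega

lemma IsL12.unused_neighbor_label_of_covered_pairs (hf : IsL12 G f) (c : ℕ)
    {S T : Set (Sym2 V)} (hSG : S ⊆ G.edgeSet) (hTG : T ⊆ G.edgeSet)
    (hS : ∀ x ∈ S, ∃ x' ∈ S, x' ≠ x) (hT : ∀ y ∈ T, ∃ y' ∈ T, y' ≠ y)
    (hcov : ∀ x ∈ S, ∀ x' ∈ S, ∀ y ∈ T, ∀ y' ∈ T, x' ≠ x → y' ≠ y →
      CoveredAtDistTwo G x x' y y') :
    ∀ x ∈ S, ∀ y ∈ T, f x = c → f y = c →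
      (∀ x' ∈ S, x' ≠ x → 2 ≤ |(f x' : ℤ) - c| →
        (∀ e ∈ G.edgeSet, f e ≠ c + 1) ∨ (∀ e ∈ G.edgeSet, (f e : ℤ) ≠ c - 1)) ∧
      (∀ y' ∈ T, y' ≠ y → 2 ≤ |(f y' : ℤ) - c| →
        (∀ e ∈ G.edgeSet, f e ≠ c + 1) ∨ (∀ e ∈ G.edgeSet, (f e : ℤ) ≠ c - 1)) := by
  intro x hx y hy hfx hfy
  constructor
  · intro x' hx' hx'x hfx'
    obtain ⟨y', hy', hy'y⟩ := hT y hy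
    exact hf.unused_neighbor_label_of_covered (hSG hx) (hTG hy) hfx hfy hfx'
      (hcov x hx x' hx' y hy y' hy' hx'x hy'y)
  · intro y' hy' hy'y hfy'
    obtain ⟨x', hx', hx'x⟩ := hS x hx
    exact hf.unused_neighbor_label_of_covered (hTG hy) (hSG hx) hfy hfx hfy'
      (hcov x hx x' hx' y hy y' hy' hx'x hy'y).symm

end Labeling

def g4Edges : Finset (Sym2 (ℤ × ℤ)) :=
  {s((0, 0), (1, 0)), s((1, 0), (1, 1)), s((1, 1), (0, 1)), s((0, 1), (0, 0)),
   s((0, 0), (-1, 0)), s((0, 0), (0, -1)), s((1, 0), (2, 0)), s((1, 0), (1, -1)),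
   s((1, 1), (2, 1)), s((1, 1), (1, 2)), s((0, 1), (-1, 1)), s((0, 1), (0, 2))}

lemma T4_adj_iff {u w : ℤ × ℤ} :
    T4.Adj u w ↔ w = u + (1, 0) ∨ w = u - (1, 0) ∨ w = u + (0, 1) ∨ w = u - (0, 1) := by
  obtain ⟨u₁, u₂⟩ := u
  obtain ⟨w₁, w₂⟩ := w
  simp only [T4, Prod.mk_add_mk, Prod.mk_sub_mk, Prod.mk.injEq]
  rcases abs_cases (u₁ - w₁) with h₁ | h₁ <;> rcases abs_cases (u₂ - w₂) with h₂ | h₂ <;> omega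

instance : DecidableRel T4.Adj := fun u w =>
  inferInstanceAs (Decidable (|u.1 - w.1| + |u.2 - w.2| = 1))

instance : DecidablePred (· ∈ Q) := fun u =>
  inferInstanceAs (Decidable (u ∈ ({(0, 0), (1, 0), (1, 1), (0, 1)} : Set (ℤ × ℤ))))

instance : DecidableRel G4.Adj := fun u w =>
  inferInstanceAs (Decidable (T4.Adj u w ∧ (u ∈ Q ∨ w ∈ Q)))

lemma edgeSet_G4 : G4.edgeSet = g4Edges := by
  refine Set.Subset.antisymm (fun e he => ?_) fun e he =>
    (by decide : ∀ e ∈ g4Edges, e ∈ G4.edgeSet) e he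
  induction e using Sym2.ind with | _ u w =>
  rw [SimpleGraph.mem_edgeSet] at he
  wlog hu : u ∈ Q generalizing u w
  · rw [Sym2.eq_swap]; exact this w u he.symm (he.2.resolve_left hu)
  simp only [Q, Set.mem_insert_iff, Set.mem_singleton_iff] at hu
  have hadj := T4_adj_iff.1 he.1
  rcases hu with rfl | rfl | rfl | rfl <;> rcases hadj with rfl | rfl | rfl | rfl <;> decide

lemma pendant_subset_edgeSet (u : ℤ × ℤ) : Pendant u ⊆ G4.edgeSet := fun _ he => he.1

lemma pendant_eq (u : ℤ × ℤ) : Pendant u = ↑{e ∈ g4Edges | u ∈ e ∧ ∃ w ∈ e, w ∉ Q} := by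
  ext e
  simp [Pendant, edgeSet_G4]

lemma exists_ne_mem_pendant {u : ℤ × ℤ} (hu : u ∈ Q) :
    ∀ x ∈ Pendant u, ∃ x' ∈ Pendant u, x' ≠ x := by
  simp only [Q, Set.mem_insert_iff, Set.mem_singleton_iff] at hu
  rcases hu with rfl | rfl | rfl | rfl <;> simp only [pendant_eq, Finset.mem_coe] <;> decide

lemma coveredAtDistTwo_of_mem_pendant {u v : ℤ × ℤ}
    (huv : (u = (0, 0) ∧ v = (1, 1)) ∨ (u = (1, 0) ∧ v = (0, 1))) :
    ∀ x ∈ Pendant u, ∀ x' ∈ Pendant u, ∀ y ∈ Pendant v, ∀ y' ∈ Pendant v, x' ≠ x → y' ≠ y →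
      CoveredAtDistTwo G4 x x' y y' := by
  rcases huv with ⟨rfl, rfl⟩ | ⟨rfl, rfl⟩ <;>
    simp only [pendant_eq, CoveredAtDistTwo, AtDistTwo, edgeSet_G4, Finset.mem_coe] <;> decide

/-- Suppose `x ∈ S_1` and `y ∈ S_2` have the common label `c`. If the other edge
`x'` of `S_1` satisfies `|f x' - c| ≥ 2`, then one of `c + 1`, `c - 1` is not the
label of any edge of `G`; likewise for the other edge `y'` of `S_2`, and
analogously with `S_3`, `S_4` in place of `S_1`, `S_2`. -/
theorem G4_unused_neighbor_label (f : Sym2 (ℤ × ℤ) → ℕ) (hf : IsL12 G4 f)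
    (c : ℕ) :
    (∀ x ∈ PS1, ∀ y ∈ PS2, f x = c → f y = c →
      (∀ x' ∈ PS1, x' ≠ x → 2 ≤ |(f x' : ℤ) - (c : ℤ)| →
        (∀ e ∈ G4.edgeSet, f e ≠ c + 1) ∨ (∀ e ∈ G4.edgeSet, (f e : ℤ) ≠ (c : ℤ) - 1)) ∧
      (∀ y' ∈ PS2, y' ≠ y → 2 ≤ |(f y' : ℤ) - (c : ℤ)| →
        (∀ e ∈ G4.edgeSet, f e ≠ c + 1) ∨ (∀ e ∈ G4.edgeSet, (f e : ℤ) ≠ (c : ℤ) - 1))) ∧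
    (∀ x ∈ PS3, ∀ y ∈ PS4, f x = c → f y = c →
      (∀ x' ∈ PS3, x' ≠ x → 2 ≤ |(f x' : ℤ) - (c : ℤ)| →
        (∀ e ∈ G4.edgeSet, f e ≠ c + 1) ∨ (∀ e ∈ G4.edgeSet, (f e : ℤ) ≠ (c : ℤ) - 1)) ∧
      (∀ y' ∈ PS4, y' ≠ y → 2 ≤ |(f y' : ℤ) - (c : ℤ)| →
        (∀ e ∈ G4.edgeSet, f e ≠ c + 1) ∨ (∀ e ∈ G4.edgeSet, (f e : ℤ) ≠ (c : ℤ) - 1))) := by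
  refine ⟨?_, ?_⟩ <;>
    apply hf.unused_neighbor_label_of_covered_pairs c (pendant_subset_edgeSet _)
      (pendant_subset_edgeSet _) (exists_ne_mem_pendant (by decide))
      (exists_ne_mem_pendant (by decide))
  exacts [coveredAtDistTwo_of_mem_pendant (.inl ⟨rfl, rfl⟩),
    coveredAtDistTwo_of_mem_pendant (.inr ⟨rfl, rfl⟩)]
end

section
/- For every L(1,2)-edge labeling f of the 86-edge graph G and every fork edge e of H (there are 12 such edges), at most three edges of G not belonging to H have label f(e). -/
/-- The infinite octagonal grid `T8` (the king graph on `ℤ × ℤ`). -/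
def T8 : SimpleGraph (ℤ × ℤ) where
  Adj u v := u ≠ v ∧ |u.1 - v.1| ≤ 1 ∧ |u.2 - v.2| ≤ 1
  symm := ⟨by
    intro u v h
    refine ⟨h.1.symm, ?_, ?_⟩
    · rw [abs_sub_comm]; exact h.2.1
    · rw [abs_sub_comm]; exact h.2.2⟩
  loopless := ⟨fun u h => h.1 rfl⟩

/-- The 2×2 block `B` of vertices of `T8`. -/
def BVerts : Set (ℤ × ℤ) := {(0,0), (1,0), (0,1), (1,1)}

/-- The 4×4 block `{-1,0,1,2} × {-1,0,1,2}` of vertices of `T8`. -/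
def Blk4 : Set (ℤ × ℤ) := {p | p.1 ∈ Set.Icc (-1 : ℤ) 2 ∧ p.2 ∈ Set.Icc (-1 : ℤ) 2}

/-- The 86-edge subgraph `G` of `T8`: all edges of `T8` incident to a vertex of the
4×4 block. -/
def G8 : SimpleGraph (ℤ × ℤ) where
  Adj u w := T8.Adj u w ∧ (u ∈ Blk4 ∨ w ∈ Blk4)
  symm := ⟨fun u w h => ⟨T8.symm.symm u w h.1, h.2.symm⟩⟩
  loopless := ⟨fun u h => T8.loopless.irrefl u h.1⟩

/-- The 26 edges of the subgraph `H` of `T8`: all edges of `T8` incident to a vertex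
of the 2×2 block `B`. -/
def HEdges : Set (Sym2 (ℤ × ℤ)) := {e | e ∈ G8.edgeSet ∧ ∃ u ∈ e, u ∈ BVerts}

/-- The fork `F_u` at a vertex `u` of `B`: the 3 edges joining `u` to its three
neighbours in the outward corner direction. -/
def Fork (u : ℤ × ℤ) : Set (Sym2 (ℤ × ℤ)) :=
  {s(u, (3 * u.1 - 1, u.2)), s(u, (3 * u.1 - 1, 3 * u.2 - 1)), s(u, (u.1, 3 * u.2 - 1))}

/-- The 12 fork edges of `H`. -/
def ForkEdges : Set (Sym2 (ℤ × ℤ)) := ⋃ u ∈ BVerts, Fork u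

/-!
Split the 4×4 block into its four 2×2 quadrants, one around each vertex of `B`. Two vertices
of the same quadrant are equal or adjacent in `G`, so two edges of `G` meeting the same quadrant
are at distance at most 2 and carry different labels unless they coincide. Every edge of `G`
meets the 4×4 block, hence some quadrant. If `e ∈ H` has the endpoint `u ∈ B`, an edge outside
`H` with label `f e` cannot meet the quadrant of `u`; so the edges outside `H` with that label
meet pairwise different quadrants among the remaining three.
-/

theorem IsL12.eq_of_label_eq {V : Type*} {G : SimpleGraph V} {f : Sym2 V → ℕ} (hf : IsL12 G f)
    {e₁ e₂ : Sym2 V} (h₁ : e₁ ∈ G.edgeSet) (h₂ : e₂ ∈ G.edgeSet) {a b : V} (ha : a ∈ e₁)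
    (hb : b ∈ e₂) (hab : a = b ∨ G.Adj a b) (hfe : f e₁ = f e₂) : e₁ = e₂ := by
  by_contra hne
  by_cases hshare : ∃ v, v ∈ e₁ ∧ v ∈ e₂
  · exact hf.1 e₁ h₁ e₂ h₂ hne hshare hfe
  · have hadj : G.Adj a b := hab.resolve_left (by rintro rfl; exact hshare ⟨a, ha, hb⟩)
    have hgap := hf.2 e₁ h₁ e₂ h₂ hne hshare
      ⟨s(a, b), hadj, ⟨a, ha, Sym2.mem_mk_left a b⟩, ⟨b, hb, Sym2.mem_mk_right a b⟩⟩
    simp [hfe] at hgap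

theorem some_pair_eq_of_card_le_four {α β : Type*} [Fintype β] (hβ : Fintype.card β ≤ 4)
    (b : β) (R : α → β → Prop) (hR : ∀ x y q, R x q → R y q → x = y) {x₁ x₂ x₃ x₄ : α}
    (h₁ : ∃ q ≠ b, R x₁ q) (h₂ : ∃ q ≠ b, R x₂ q) (h₃ : ∃ q ≠ b, R x₃ q)
    (h₄ : ∃ q ≠ b, R x₄ q) :
    x₁ = x₂ ∨ x₁ = x₃ ∨ x₁ = x₄ ∨ x₂ = x₃ ∨ x₂ = x₄ ∨ x₃ = x₄ := by
  obtain ⟨q₁, hb₁, hq₁⟩ := h₁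
  obtain ⟨q₂, hb₂, hq₂⟩ := h₂
  obtain ⟨q₃, hb₃, hq₃⟩ := h₃
  obtain ⟨q₄, hb₄, hq₄⟩ := h₄
  by_contra! hne
  obtain ⟨h12, h13, h14, h23, h24, h34⟩ := hne
  have hq : ∀ {x y q q'}, x ≠ y → R x q → R y q' → q ≠ q' := by
    rintro x y q q' hxy hx hy rfl
    exact hxy (hR x y q hx hy)
  have hnodup : [b, q₁, q₂, q₃, q₄].Nodup := by
    simp [hb₁.symm, hb₂.symm, hb₃.symm, hb₄.symm, hq h12 hq₁ hq₂, hq h13 hq₁ hq₃, hq h14 hq₁ hq₄,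
      hq h23 hq₂ hq₃, hq h24 hq₂ hq₄, hq h34 hq₃ hq₄]
  have := hnodup.length_le_card
  simp only [List.length_cons, List.length_nil] at this
  omega

def quadrant (w : ℤ × ℤ) : Bool × Bool := (0 < w.1, 0 < w.2)

theorem eq_or_adj_of_quadrant_eq {w w' : ℤ × ℤ} (hw : w ∈ Blk4) (hw' : w' ∈ Blk4)
    (hq : quadrant w = quadrant w') : w = w' ∨ G8.Adj w w' := by
  refine or_iff_not_imp_left.2 fun hne => ⟨⟨hne, ?_, ?_⟩, Or.inl hw⟩ <;>
    simp only [Blk4, Set.mem_ofPred_eq, Set.mem_Icc] at hw hw' <;>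
    simp only [quadrant, Prod.mk.injEq, decide_eq_decide] at hq <;>
    rw [abs_le] <;> omega

theorem exists_mem_Blk4_of_mem_edgeSet {e : Sym2 (ℤ × ℤ)} (he : e ∈ G8.edgeSet) :
    ∃ w ∈ e, w ∈ Blk4 := by
  induction e using Sym2.ind with
  | _ u v =>
    rcases he.2 with hu | hv
    exacts [⟨u, Sym2.mem_mk_left u v, hu⟩, ⟨v, Sym2.mem_mk_right u v, hv⟩]

theorem BVerts_subset_Blk4 : BVerts ⊆ Blk4 := by
  rintro u (rfl | rfl | rfl | rfl) <;> simp [Blk4]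

/-- For every L(1,2)-edge labeling of `G` and every fork edge `e` of `H`, at most
three edges of `G` outside `H` have label `f e`. -/
theorem fork_reused_at_most_thrice (f : Sym2 (ℤ × ℤ) → ℕ) (hf : IsL12 G8 f) :
    ∀ e ∈ HEdges, e ∈ ForkEdges →
      ∀ e1 ∈ G8.edgeSet \ HEdges, ∀ e2 ∈ G8.edgeSet \ HEdges,
        ∀ e3 ∈ G8.edgeSet \ HEdges, ∀ e4 ∈ G8.edgeSet \ HEdges,
        f e1 = f e → f e2 = f e → f e3 = f e → f e4 = f e →
        e1 = e2 ∨ e1 = e3 ∨ e1 = e4 ∨ e2 = e3 ∨ e2 = e4 ∨ e3 = e4 := by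
  rintro e ⟨he, u, hue, hu⟩ - e₁ h₁ e₂ h₂ e₃ h₃ e₄ h₄ l₁ l₂ l₃ l₄
  let MeetsQuadrant (e' : Sym2 (ℤ × ℤ)) (q : Bool × Bool) : Prop :=
    e' ∈ G8.edgeSet \ HEdges ∧ f e' = f e ∧ ∃ w ∈ e', w ∈ Blk4 ∧ quadrant w = q
  have avoids : ∀ e' ∈ G8.edgeSet \ HEdges, f e' = f e →
      ∃ q ≠ quadrant u, MeetsQuadrant e' q := by
    intro e' he' hfe'
    obtain ⟨w, hwe, hw⟩ := exists_mem_Blk4_of_mem_edgeSet he'.1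
    refine ⟨quadrant w, fun hq => he'.2 ?_, he', hfe', w, hwe, hw, rfl⟩
    rw [hf.eq_of_label_eq he'.1 he hwe hue
      (eq_or_adj_of_quadrant_eq hw (BVerts_subset_Blk4 hu) hq) hfe']
    exact ⟨he, u, hue, hu⟩
  refine some_pair_eq_of_card_le_four (by simp) (quadrant u) MeetsQuadrant ?_
    (avoids e₁ h₁ l₁) (avoids e₂ h₂ l₂) (avoids e₃ h₃ l₃) (avoids e₄ h₄ l₄)
  rintro x y q ⟨hx, lx, w, hwx, hw, rfl⟩ ⟨hy, ly, w', hwy, hw', hq⟩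
  exact hf.eq_of_label_eq hx.1 hy.1 hwx hwy (eq_or_adj_of_quadrant_eq hw hw' hq.symm)
    (lx.trans ly.symm)
end
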